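/- Let X and Y be random variables on a finite probability space. For any c > 0, conditioning does not increase the t-entropy: H_c(X|Y) ≤ H_c(X), with equality when X and Y are independent. -/

import Mathlib

open Real

/-- t-entropy of the first marginal of a joint pmf `p : Fin n → Fin m → ℝ`. -/
noncomputable def tEntropyMargX {n m : ℕ} (c : ℝ) (p : Fin n → Fin m → ℝ) : ℝ :=
  (∑ i, (∑ j, p i j) * Real.arctan ((∑ j, p i j) ^ (-c))) - Real.pi / 4

/-- Conditional t-entropy `H_c(X | Y)` with `p(x|y) = p(x,y)/p(y)`
(zero-probability terms contributing 0). -/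
noncomputable def tEntropyCondXY {n m : ℕ} (c : ℝ) (p : Fin n → Fin m → ℝ) : ℝ :=
  (∑ i, ∑ j, p i j * Real.arctan ((p i j / ∑ i', p i' j) ^ (-c))) - Real.pi / 4


open Finset

/-!
Since `p(x) = ∑_y p(y) p(x|y)`, the inequality is Jensen's inequality for the concave function
`φ(t) = t * arctan (t ^ (-c))` on `[0, 1]`, applied for each `x` and summed. Concavity:
`φ'(t) = G(t ^ (-c))` with `G(s) = arctan s - c * s / (1 + s ^ 2)`, which is increasing on
`[1, ∞)`, while `t ^ (-c)` decreases on `(0, 1]`. Under independence `p(x|y) = p(x)` whenever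
`p(y) > 0`, so both sides agree term by term.
-/

noncomputable def tEntropyTerm (c t : ℝ) : ℝ := t * arctan (t ^ (-c))

theorem monotoneOn_arctan_sub_mul_div {c : ℝ} (hc : 0 ≤ c) :
    MonotoneOn (fun s => arctan s - c * (s / (1 + s ^ 2))) (Set.Ici 1) := by
  have hderiv (s : ℝ) : HasDerivAt (fun s => arctan s - c * (s / (1 + s ^ 2)))
      (1 / (1 + s ^ 2) - c * ((1 - s ^ 2) / (1 + s ^ 2) ^ 2)) s := by
    have hden : HasDerivAt (fun s : ℝ => 1 + s ^ 2) (2 * s) s := by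
      simpa using (hasDerivAt_pow 2 s).const_add 1
    refine ((hasDerivAt_arctan s).sub
      (((hasDerivAt_id s).div hden (by positivity)).const_mul c)).congr_deriv ?_
    simp only [id]; ring
  refine monotoneOn_of_deriv_nonneg (convex_Ici 1)
    (fun s _ => (hderiv s).continuousAt.continuousWithinAt)
    (fun s _ => (hderiv s).differentiableAt.differentiableWithinAt) fun s hs => ?_
  rw [interior_Ici, Set.mem_Ioi] at hs
  rw [(hderiv s).deriv]
  have hquot : (1 - s ^ 2) / (1 + s ^ 2) ^ 2 ≤ 0 :=
    div_nonpos_of_nonpos_of_nonneg (by nlinarith) (by positivity)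
  have hpos : 0 < 1 / (1 + s ^ 2) := by positivity
  nlinarith

theorem hasDerivAt_tEntropyTerm (c : ℝ) {t : ℝ} (ht : 0 < t) :
    HasDerivAt (tEntropyTerm c)
      (arctan (t ^ (-c)) - c * (t ^ (-c) / (1 + (t ^ (-c)) ^ 2))) t := by
  have hpow : HasDerivAt (fun t : ℝ => t ^ (-c)) (-c * t ^ (-c - 1)) t := by
    simpa [mul_comm] using hasDerivAt_rpow_const (p := -c) (Or.inl ht.ne')
  have hmul : t * t ^ (-c - 1) = t ^ (-c) := by
    rw [mul_comm, ← rpow_add_one ht.ne']; ring_nf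
  refine ((hasDerivAt_id t).mul ((hasDerivAt_arctan _).comp t hpow)).congr_deriv ?_
  simp only [id, Function.comp_apply]
  linear_combination -(c / (1 + (t ^ (-c)) ^ 2)) * hmul

theorem continuous_tEntropyTerm (c : ℝ) : Continuous (tEntropyTerm c) := by
  refine continuous_iff_continuousAt.2 fun t => ?_
  rcases eq_or_ne t 0 with rfl | ht
  · have : Filter.Tendsto (tEntropyTerm c) (nhds 0) (nhds 0) :=
      Filter.tendsto_id.zero_mul_isBoundedUnder_le
        (Filter.isBoundedUnder_of ⟨π / 2, fun t => by
          simpa [abs_le] using ⟨(neg_pi_div_two_lt_arctan _).le, (arctan_lt_pi_div_two _).le⟩⟩)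
    rwa [ContinuousAt, tEntropyTerm, zero_mul]
  · exact continuousAt_id.mul (continuous_arctan.continuousAt.comp
      (continuousAt_rpow_const t (-c) (Or.inl ht)))

theorem concaveOn_tEntropyTerm {c : ℝ} (hc : 0 ≤ c) :
    ConcaveOn ℝ (Set.Icc 0 1) (tEntropyTerm c) := by
  refine AntitoneOn.concaveOn_of_deriv (convex_Icc 0 1) (continuous_tEntropyTerm c).continuousOn
    ?_ ?_
  · rw [interior_Icc]
    exact fun t ht => (hasDerivAt_tEntropyTerm c ht.1).differentiableAt.differentiableWithinAt
  · rw [interior_Icc]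
    intro a ha b hb hab
    rw [(hasDerivAt_tEntropyTerm c ha.1).deriv, (hasDerivAt_tEntropyTerm c hb.1).deriv]
    have hb1 : 1 ≤ b ^ (-c) :=
      one_le_rpow_of_pos_of_le_one_of_nonpos hb.1 hb.2.le (neg_nonpos.2 hc)
    have hba : b ^ (-c) ≤ a ^ (-c) := rpow_le_rpow_of_nonpos ha.1 hab (neg_nonpos.2 hc)
    exact monotoneOn_arctan_sub_mul_div hc hb1 (hb1.trans hba) hba

theorem sum_mul_arctan_div_rpow_le {ι : Type*} [Fintype ι] {c : ℝ} (hc : 0 ≤ c) {x q : ι → ℝ}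
    (hx : ∀ j, 0 ≤ x j) (hxq : ∀ j, x j ≤ q j) (hq : ∑ j, q j = 1) :
    ∑ j, x j * arctan ((x j / q j) ^ (-c)) ≤ (∑ j, x j) * arctan ((∑ j, x j) ^ (-c)) := by
  have hq0 (j : ι) : 0 ≤ q j := (hx j).trans (hxq j)
  have hcancel (j : ι) : q j * (x j / q j) = x j :=
    mul_div_cancel_of_imp' fun h => le_antisymm (h ▸ hxq j) (hx j)
  calc ∑ j, x j * arctan ((x j / q j) ^ (-c))
      = ∑ j, q j • tEntropyTerm c (x j / q j) := by
        simp only [tEntropyTerm, smul_eq_mul, ← mul_assoc, hcancel]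
    _ ≤ tEntropyTerm c (∑ j, q j • (x j / q j)) :=
        (concaveOn_tEntropyTerm hc).le_map_sum (fun j _ => hq0 j) hq
          fun j _ => ⟨div_nonneg (hx j) (hq0 j), div_le_one_of_le₀ (hxq j) (hq0 j)⟩
    _ = (∑ j, x j) * arctan ((∑ j, x j) ^ (-c)) := by
        simp only [smul_eq_mul, hcancel, tEntropyTerm]

theorem sum_mul_arctan_div_rpow_of_eq_mul {ι : Type*} [Fintype ι] (c r : ℝ) {x q : ι → ℝ}
    (hxq : ∀ j, x j = r * q j) (hq : ∑ j, q j = 1) :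
    ∑ j, x j * arctan ((x j / q j) ^ (-c)) = r * arctan (r ^ (-c)) := by
  have hterm (j : ι) : x j * arctan ((x j / q j) ^ (-c)) = x j * arctan (r ^ (-c)) := by
    rcases eq_or_ne (q j) 0 with h | h
    · simp [hxq j, h]
    · rw [hxq j, mul_div_cancel_right₀ r h]
  rw [sum_congr rfl fun j _ => hterm j, ← sum_mul, sum_congr rfl fun j _ => hxq j, ← mul_sum, hq,
    mul_one]

theorem tEntropy_cond_le {n m : ℕ} (c : ℝ) (hc : 0 < c)
    (p : Fin n → Fin m → ℝ) (hp : ∀ i j, 0 ≤ p i j)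
    (hsum : ∑ i, ∑ j, p i j = 1) :
    tEntropyCondXY c p ≤ tEntropyMargX c p ∧
    ((∀ i j, p i j = (∑ j', p i j') * (∑ i', p i' j)) →
      tEntropyCondXY c p = tEntropyMargX c p) := by
  have hmarg : ∑ j, ∑ i, p i j = 1 := by rw [sum_comm, hsum]
  refine ⟨?_, fun hind => ?_⟩
  · unfold tEntropyCondXY tEntropyMargX
    gcongr with i
    exact sum_mul_arctan_div_rpow_le hc.le (hp i)
      (fun j => single_le_sum (fun i' _ => hp i' j) (mem_univ i)) hmarg
  · unfold tEntropyCondXY tEntropyMargX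
    congr 1
    exact sum_congr rfl fun i _ => sum_mul_arctan_div_rpow_of_eq_mul c _ (hind i) hmarg
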